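/- Let G be a finite simple graph that is (C4,P6)-free and contains an induced 5-cycle C = v1v2v3v4v5, and let i ∈ {1,...,5} (indices modulo 5). If both S(i-1,i-2) and S(i+1,i+2) are nonempty, then every vertex of S(i-1,i,i+1) is either complete or anti-complete to S(i-1,i-2) ∪ S(i+1,i+2). -/

import Mathlib

open SimpleGraph

/-- `G` contains no induced subgraph isomorphic to `H` (`H`-freeness, via graph embeddings). -/
def Free {V W : Type*} (G : SimpleGraph V) (H : SimpleGraph W) : Prop :=
  IsEmpty (H ↪g G)

/-- `v 1, v 2, v 3, v 4, v 0` are the vertices `v₁,…,v₅` of an induced 5-cycle of `G`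
(in cyclic order, indices taken modulo 5, with `v 0` playing the role of `v₅`). -/
def IsInducedC5 {V : Type*} (G : SimpleGraph V) (v : ZMod 5 → V) : Prop :=
  Function.Injective v ∧ ∀ i j, G.Adj (v i) (v j) ↔ (j = i + 1 ∨ i = j + 1)

/-- `S(X)`: the vertices outside the cycle whose neighbourhood on the cycle is exactly
`{v i : i ∈ X}`. -/
def cycS {V : Type*} (G : SimpleGraph V) (v : ZMod 5 → V) (X : Set (ZMod 5)) : Set V :=
  {u | (∀ i, u ≠ v i) ∧ ∀ i, (G.Adj u (v i) ↔ i ∈ X)}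

/-- `S_j`: the vertices outside the cycle with exactly `j` neighbours on the cycle. -/
def cycSdeg {V : Type*} (G : SimpleGraph V) (v : ZMod 5 → V) (j : ℕ) : Set V :=
  {u | (∀ i, u ≠ v i) ∧ {i : ZMod 5 | G.Adj u (v i)}.ncard = j}

/-- `A` is complete to `B`: every vertex of `A` is adjacent to every vertex of `B`. -/
def CompleteTo {V : Type*} (G : SimpleGraph V) (A B : Set V) : Prop :=
  ∀ a ∈ A, ∀ b ∈ B, G.Adj a b

/-- `A` is anti-complete to `B`: there are no edges between `A` and `B`. -/
def AntiCompleteTo {V : Type*} (G : SimpleGraph V) (A B : Set V) : Prop :=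
  ∀ a ∈ A, ∀ b ∈ B, ¬ G.Adj a b

/-! Normalise to `i = 0` by rotating the cycle. A vertex `a` of `S(-1,-2)` and a vertex `b` of
`S(1,2)` are non-adjacent, since otherwise `a b v₂ v₃` is an induced `C₄`. Hence if `s` saw `a`
but not `b`, then `v₀ s a v₃ v₂ b` would be an induced `P₆`; by the reflection `j ↦ -j` the same
holds with `a` and `b` exchanged. So `s` sees either all or none of `S(-1,-2) ∪ S(1,2)`. -/

open Function

section

variable {V W : Type*} {G : SimpleGraph V}

lemma injective_of_adj_iff {H : SimpleGraph W} {f : W → V}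
    (hf : ∀ x y, G.Adj (f x) (f y) ↔ H.Adj x y) (hH : ∀ x y, (∀ z, H.Adj x z ↔ H.Adj y z) → x = y) :
    Injective f :=
  fun x y hxy => hH x y fun z => by rw [← hf, ← hf, hxy]

namespace Free

lemma false_of_inducedC4 (hC4 : _root_.Free G (cycleGraph 4)) {a b c d : V}
    (hac : a ≠ c) (hbd : b ≠ d)
    (hab : G.Adj a b) (hbc : G.Adj b c) (hcd : G.Adj c d) (hda : G.Adj d a)
    (nac : ¬ G.Adj a c) (nbd : ¬ G.Adj b d) : False := by
  have hadj : ∀ j k, G.Adj (![a, b, c, d] j) (![a, b, c, d] k) ↔ (cycleGraph 4).Adj j k := by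
    intro j k
    fin_cases j <;> fin_cases k <;> simp [cycleGraph_adj, adj_comm, hda.symm, *] <;> decide
  have hinj : Injective ![a, b, c, d] := by
    intro j k hjk
    fin_cases j <;> fin_cases k <;> simp_all [eq_comm, hab.ne, hbc.ne, hcd.ne]
  exact hC4.false ⟨⟨_, hinj⟩, hadj _ _⟩

lemma false_of_inducedP6 (hP6 : _root_.Free G (pathGraph 6)) {x₀ x₁ x₂ x₃ x₄ x₅ : V}
    (h01 : G.Adj x₀ x₁) (h12 : G.Adj x₁ x₂) (h23 : G.Adj x₂ x₃) (h34 : G.Adj x₃ x₄)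
    (h45 : G.Adj x₄ x₅)
    (n02 : ¬ G.Adj x₀ x₂) (n03 : ¬ G.Adj x₀ x₃) (n04 : ¬ G.Adj x₀ x₄) (n05 : ¬ G.Adj x₀ x₅)
    (n13 : ¬ G.Adj x₁ x₃) (n14 : ¬ G.Adj x₁ x₄) (n15 : ¬ G.Adj x₁ x₅)
    (n24 : ¬ G.Adj x₂ x₄) (n25 : ¬ G.Adj x₂ x₅) (n35 : ¬ G.Adj x₃ x₅) : False := by
  have hadj : ∀ j k, G.Adj (![x₀, x₁, x₂, x₃, x₄, x₅] j) (![x₀, x₁, x₂, x₃, x₄, x₅] k) ↔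
      (pathGraph 6).Adj j k := by
    intro j k
    fin_cases j <;> fin_cases k <;> simp [pathGraph_adj, adj_comm, *]
  have htwin : ∀ j k : Fin 6, (∀ z, (pathGraph 6).Adj j z ↔ (pathGraph 6).Adj k z) → j = k := by
    simp only [pathGraph_adj]; decide
  exact hP6.false ⟨⟨_, injective_of_adj_iff hadj htwin⟩, hadj _ _⟩

end Free

section FiveCycle

variable {v : ZMod 5 → V} {X : Set (ZMod 5)} {u : V}

lemma IsInducedC5.comp_equiv (hv : IsInducedC5 G v) (e : ZMod 5 ≃ ZMod 5)
    (he : ∀ i j, (e j = e i + 1 ∨ e i = e j + 1) ↔ (j = i + 1 ∨ i = j + 1)) :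
    IsInducedC5 G (v ∘ e) :=
  ⟨hv.1.comp e.injective, fun i j => (hv.2 (e i) (e j)).trans (he i j)⟩

lemma mem_cycS_comp_equiv (e : ZMod 5 ≃ ZMod 5) {Y : Set (ZMod 5)} (hXY : ∀ j, e j ∈ X ↔ j ∈ Y)
    (hu : u ∈ cycS G v X) : u ∈ cycS G (v ∘ e) Y :=
  ⟨fun j => hu.1 (e j), fun j => (hu.2 (e j)).trans (hXY j)⟩

lemma adj_of_mem_cycS {i : ZMod 5} (hu : u ∈ cycS G v X) (hi : i ∈ X) : G.Adj u (v i) :=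
  (hu.2 i).mpr hi

lemma not_adj_of_mem_cycS {i : ZMod 5} (hu : u ∈ cycS G v X) (hi : i ∉ X) : ¬ G.Adj u (v i) :=
  mt (hu.2 i).mp hi

variable {s a b : V}

lemma not_adj_of_mem_cycS_of_mem_cycS (hC4 : _root_.Free G (cycleGraph 4))
    (hv : IsInducedC5 G v) (ha : a ∈ cycS G v {-1, -2}) (hb : b ∈ cycS G v {1, 2}) :
    ¬ G.Adj a b := fun hab =>
  hC4.false_of_inducedC4 (ha.1 2) (hb.1 3) hab (adj_of_mem_cycS hb (by decide))
    ((hv.2 2 3).mpr (by decide)) (adj_of_mem_cycS ha (by decide)).symm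
    (not_adj_of_mem_cycS ha (by decide)) (not_adj_of_mem_cycS hb (by decide))

lemma adj_of_adj_of_mem_cycS (hC4 : _root_.Free G (cycleGraph 4))
    (hP6 : _root_.Free G (pathGraph 6)) (hv : IsInducedC5 G v)
    (hs : s ∈ cycS G v {-1, 0, 1}) (ha : a ∈ cycS G v {-1, -2}) (hb : b ∈ cycS G v {1, 2})
    (hsa : G.Adj s a) : G.Adj s b := by
  by_contra hsb
  -- `v 0 - s - a - v 3 - v 2 - b` would be an induced `P₆`
  exact hP6.false_of_inducedP6 (adj_of_mem_cycS hs (by decide)).symm hsa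
    (adj_of_mem_cycS ha (by decide)) ((hv.2 3 2).mpr (by decide))
    (adj_of_mem_cycS hb (by decide)).symm
    (mt Adj.symm (not_adj_of_mem_cycS ha (by decide))) (mt (hv.2 0 3).mp (by decide))
    (mt (hv.2 0 2).mp (by decide)) (mt Adj.symm (not_adj_of_mem_cycS hb (by decide)))
    (not_adj_of_mem_cycS hs (by decide)) (not_adj_of_mem_cycS hs (by decide)) hsb
    (not_adj_of_mem_cycS ha (by decide)) (not_adj_of_mem_cycS_of_mem_cycS hC4 hv ha hb)
    (mt Adj.symm (not_adj_of_mem_cycS hb (by decide)))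

lemma adj_iff_adj_of_mem_cycS (hC4 : _root_.Free G (cycleGraph 4))
    (hP6 : _root_.Free G (pathGraph 6)) (hv : IsInducedC5 G v)
    (hs : s ∈ cycS G v {-1, 0, 1}) (ha : a ∈ cycS G v {-1, -2}) (hb : b ∈ cycS G v {1, 2}) :
    G.Adj s a ↔ G.Adj s b := by
  refine ⟨adj_of_adj_of_mem_cycS hC4 hP6 hv hs ha hb, fun hsb => ?_⟩
  let e := Equiv.neg (ZMod 5)
  have hv' : IsInducedC5 G (v ∘ e) := hv.comp_equiv e (by simp only [e, Equiv.neg_apply]; decide)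
  exact adj_of_adj_of_mem_cycS hC4 hP6 hv'
    (mem_cycS_comp_equiv e (by simp only [e, Equiv.neg_apply]; decide) hs)
    (mem_cycS_comp_equiv e (by simp only [e, Equiv.neg_apply]; decide) hb)
    (mem_cycS_comp_equiv e (by simp only [e, Equiv.neg_apply]; decide) ha) hsb

end FiveCycle

lemma complete_or_antiComplete_of_forall_adj_iff {A B : Set V} {s : V} (hA : A.Nonempty)
    (hB : B.Nonempty) (h : ∀ a ∈ A, ∀ b ∈ B, G.Adj s a ↔ G.Adj s b) :
    CompleteTo G {s} (A ∪ B) ∨ AntiCompleteTo G {s} (A ∪ B) := by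
  obtain ⟨a₀, ha₀⟩ := hA
  obtain ⟨b₀, hb₀⟩ := hB
  have hA' : ∀ a ∈ A, G.Adj s a ↔ G.Adj s b₀ := fun a ha => h a ha b₀ hb₀
  have hB' : ∀ b ∈ B, G.Adj s b ↔ G.Adj s b₀ := fun b hb => (h a₀ ha₀ b hb).symm.trans (hA' a₀ ha₀)
  by_cases hsb₀ : G.Adj s b₀
  · left
    rintro _ rfl x (hx | hx)
    exacts [(hA' x hx).mpr hsb₀, (hB' x hx).mpr hsb₀]
  · right
    rintro _ rfl x (hx | hx)
    exacts [mt (hA' x hx).mp hsb₀, mt (hB' x hx).mp hsb₀]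

end

theorem stmt_5_general {V : Type*} (G : SimpleGraph V)
    (hC4 : _root_.Free G (cycleGraph 4)) (hP6 : _root_.Free G (pathGraph 6))
    (v : ZMod 5 → V) (hv : IsInducedC5 G v) (i : ZMod 5)
    (h1 : (cycS G v {i - 1, i - 2}).Nonempty) (h2 : (cycS G v {i + 1, i + 2}).Nonempty)
    (s : V) (hs : s ∈ cycS G v {i - 1, i, i + 1}) :
    CompleteTo G {s} (cycS G v {i - 1, i - 2} ∪ cycS G v {i + 1, i + 2}) ∨
      AntiCompleteTo G {s} (cycS G v {i - 1, i - 2} ∪ cycS G v {i + 1, i + 2}) := by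
  let e := Equiv.addLeft i
  have hv' : IsInducedC5 G (v ∘ e) := hv.comp_equiv e (by simp [e, add_assoc])
  refine complete_or_antiComplete_of_forall_adj_iff h1 h2 fun a ha b hb => ?_
  exact adj_iff_adj_of_mem_cycS hC4 hP6 hv'
    (mem_cycS_comp_equiv e (by simp [e, sub_eq_add_neg]) hs)
    (mem_cycS_comp_equiv e (by simp [e, sub_eq_add_neg]) ha)
    (mem_cycS_comp_equiv e (by simp [e]) hb)

theorem stmt_5 {V : Type*} [Fintype V] (G : SimpleGraph V)
    (hC4 : _root_.Free G (cycleGraph 4)) (hP6 : _root_.Free G (pathGraph 6))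
    (v : ZMod 5 → V) (hv : IsInducedC5 G v) (i : ZMod 5)
    (h1 : (cycS G v {i - 1, i - 2}).Nonempty) (h2 : (cycS G v {i + 1, i + 2}).Nonempty)
    (s : V) (hs : s ∈ cycS G v {i - 1, i, i + 1}) :
    CompleteTo G {s} (cycS G v {i - 1, i - 2} ∪ cycS G v {i + 1, i + 2}) ∨
      AntiCompleteTo G {s} (cycS G v {i - 1, i - 2} ∪ cycS G v {i + 1, i + 2}) :=
  stmt_5_general G hC4 hP6 v hv i h1 h2 s hs
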